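/- arXiv:1101.2330 — 3 statements merged into one kernel-verified Lean document; each statement's English description precedes it below -/
import Mathlib

section
/- In a C-homogeneous locally finite connected digraph D containing a directed triangle, every vertex has out-degree equal to its in-degree. -/
/-- An automorphism of the digraph given by edge relation `E`. -/
def IsAuto {V : Type*} (E : V → V → Prop) (φ : Equiv.Perm V) : Prop :=
  ∀ u v : V, E u v ↔ E (φ u) (φ v)

/-- Adjacency in the underlying undirected graph. -/
def Adj {V : Type*} (E : V → V → Prop) (a b : V) : Prop := E a b ∨ E b a

/-- Vertex-transitivity: the automorphism group acts transitively on vertices. -/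
def VertTrans {V : Type*} (E : V → V → Prop) : Prop :=
  ∀ a b : V, ∃ φ : Equiv.Perm V, IsAuto E φ ∧ φ a = b

/-- The finite vertex set `S` induces a connected subdigraph. -/
def ConnSub {V : Type*} (E : V → V → Prop) (S : Finset V) : Prop :=
  ∀ x ∈ S, ∀ y ∈ S,
    Relation.ReflTransGen (fun a b => a ∈ S ∧ b ∈ S ∧ Adj E a b) x y

/-- C-homogeneity: every isomorphism between two finite connected induced
subdigraphs extends to an automorphism of the digraph. -/
def CHom {V : Type*} (E : V → V → Prop) : Prop :=
  ∀ (S T : Finset V), ConnSub E S → ConnSub E T →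
    ∀ f : V → V, Set.BijOn f (↑S) (↑T) →
      (∀ a ∈ S, ∀ b ∈ S, E a b ↔ E (f a) (f b)) →
      ∃ φ : Equiv.Perm V, IsAuto E φ ∧ ∀ a ∈ S, φ a = f a

lemma connPair {V : Type*} [DecidableEq V] (E : V → V → Prop) {u v : V} (h : E u v) :
    ConnSub E ({u, v} : Finset V) := by
  intro x hx y hy
  have hu : u ∈ ({u, v} : Finset V) := by simp
  have hv : v ∈ ({u, v} : Finset V) := by simp
  have huv : Relation.ReflTransGen
      (fun a b => a ∈ ({u, v} : Finset V) ∧ b ∈ ({u, v} : Finset V) ∧ Adj E a b) u v :=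
    Relation.ReflTransGen.single ⟨hu, hv, Or.inl h⟩
  have hvu : Relation.ReflTransGen
      (fun a b => a ∈ ({u, v} : Finset V) ∧ b ∈ ({u, v} : Finset V) ∧ Adj E a b) v u :=
    Relation.ReflTransGen.single ⟨hv, hu, Or.inr h⟩
  simp only [Finset.mem_insert, Finset.mem_singleton] at hx hy
  rcases hx with rfl | rfl <;> rcases hy with rfl | rfl
  · exact Relation.ReflTransGen.refl
  · exact huv
  · exact hvu
  · exact Relation.ReflTransGen.refl

lemma edge_auto {V : Type*} {E : V → V → Prop}
    (hirr : ∀ x, ¬ E x x) (hanti : ∀ x y, E x y → ¬ E y x)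
    (hC : CHom E) {u v u' v' : V} (h : E u v) (h' : E u' v') :
    ∃ φ : Equiv.Perm V, IsAuto E φ ∧ φ u = u' ∧ φ v = v' := by
  classical
  have hne : u ≠ v := fun e => hirr u (e ▸ h)
  have hne' : u' ≠ v' := fun e => hirr u' (e ▸ h')
  set f : V → V := fun w => if w = u then u' else v' with hf
  have hfu : f u = u' := by simp [hf]
  have hfv : f v = v' := by simp [hf, hne.symm]
  have hbij : Set.BijOn f (↑({u, v} : Finset V)) (↑({u', v'} : Finset V)) := by
    constructor
    · intro a ha
      simp only [Finset.coe_insert, Finset.coe_singleton, Set.mem_insert_iff,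
        Set.mem_singleton_iff] at ha ⊢
      rcases ha with rfl | rfl
      · exact Or.inl hfu
      · exact Or.inr hfv
    constructor
    · intro a ha b hb hab
      simp only [Finset.coe_insert, Finset.coe_singleton, Set.mem_insert_iff,
        Set.mem_singleton_iff] at ha hb
      rcases ha with rfl | rfl <;> rcases hb with rfl | rfl <;>
        simp_all [hfu, hfv]
    · intro b hb
      simp only [Finset.coe_insert, Finset.coe_singleton, Set.mem_insert_iff,
        Set.mem_singleton_iff] at hb
      rcases hb with rfl | rfl
      · exact ⟨u, by simp, hfu⟩
      · exact ⟨v, by simp, hfv⟩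
  have hpres : ∀ a ∈ ({u, v} : Finset V), ∀ b ∈ ({u, v} : Finset V),
      E a b ↔ E (f a) (f b) := by
    intro a ha b hb
    simp only [Finset.mem_insert, Finset.mem_singleton] at ha hb
    rcases ha with rfl | rfl <;> rcases hb with rfl | rfl
    · rw [hfu]; exact iff_of_false (hirr _) (hirr _)
    · rw [hfu, hfv]; exact iff_of_true h h'
    · rw [hfu, hfv]; exact iff_of_false (hanti _ _ h) (hanti _ _ h')
    · rw [hfv]; exact iff_of_false (hirr _) (hirr _)
  obtain ⟨φ, hφ, heq⟩ := hC {u, v} {u', v'} (connPair E h) (connPair E h') f hbij hpres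
  exact ⟨φ, hφ, by rw [heq u (by simp), hfu], by rw [heq v (by simp), hfv]⟩

lemma tri_count_eq {V : Type*} {E : V → V → Prop}
    (hirr : ∀ x, ¬ E x x) (hanti : ∀ x y, E x y → ¬ E y x)
    (hC : CHom E) {u v u' v' : V} (h : E u v) (h' : E u' v') :
    {w | E v w ∧ E w u}.ncard = {w | E v' w ∧ E w u'}.ncard := by
  obtain ⟨φ, hφ, hu, hv⟩ := edge_auto hirr hanti hC h h'
  have himg : φ '' {w | E v w ∧ E w u} = {w | E v' w ∧ E w u'} := by
    ext w'
    constructor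
    · rintro ⟨w, ⟨h1, h2⟩, rfl⟩
      exact ⟨hv ▸ (hφ v w).mp h1, hu ▸ (hφ w u).mp h2⟩
    · rintro ⟨h1, h2⟩
      refine ⟨φ.symm w', ⟨?_, ?_⟩, φ.apply_symm_apply w'⟩
      · have := (hφ v (φ.symm w'))
        rw [hv, φ.apply_symm_apply] at this
        exact this.mpr h1
      · have := (hφ (φ.symm w') u)
        rw [hu, φ.apply_symm_apply] at this
        exact this.mpr h2
  rw [← himg, Set.ncard_image_of_injective _ φ.injective]

/-- In a C-homogeneous locally finite connected digraph containing a directed triangle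
(with independent out- and in-neighborhoods), every vertex has out-degree equal to
its in-degree. -/
theorem stmt3 {V : Type*} (E : V → V → Prop)
    (hirr : ∀ x, ¬ E x x) (hanti : ∀ x y, E x y → ¬ E y x)
    (hconn : ∀ a b : V, Relation.ReflTransGen (Adj E) a b)
    (hlf : ∀ x : V, {y | Adj E x y}.Finite)
    (hC : CHom E)
    (hindepOut : ∀ x y z : V, E x y → E x z → ¬ E y z)
    (hindepIn : ∀ x y z : V, E y x → E z x → ¬ E y z)
    (htri : ∃ a b c : V, E a b ∧ E b c ∧ E c a) :
    ∀ x : V, {y | E x y}.ncard = {y | E y x}.ncard := by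
  classical
  obtain ⟨a, b, c0, hab, hbc, hca⟩ := htri
  intro x
  -- finiteness
  have hfo : {y | E x y}.Finite := (hlf x).subset (fun y hy => Or.inl hy)
  have hfi : {y | E y x}.Finite := (hlf x).subset (fun y hy => Or.inr hy)
  set A : Finset V := hfo.toFinset with hA
  set B : Finset V := hfi.toFinset with hB
  -- the constant c : number of triangles through any edge
  set c : ℕ := {w | E b w ∧ E w a}.ncard with hc
  have hcfin : {w | E b w ∧ E w a}.Finite :=
    ((hlf b).subset (fun y hy => Or.inl hy)).subset (fun w hw => hw.1)
  have hcpos : 0 < c := (Set.ncard_pos hcfin).mpr ⟨c0, hbc, hca⟩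
  -- triangles through x
  set T : Finset (V × V) := (A ×ˢ B).filter (fun p => E p.1 p.2) with hT
  -- count fiberwise over A
  have h1 : T.card = A.card * c := by
    rw [Finset.card_eq_sum_card_fiberwise (f := Prod.fst) (t := A)
      (fun p hp => (Finset.mem_filter.mp hp).1 |> Finset.mem_product.mp |>.1)]
    rw [Finset.sum_congr rfl (fun y hy => ?_), Finset.sum_const, smul_eq_mul]
    have hxy : E x y := by rw [hA] at hy; simpa using hy
    have hfib : T.filter (fun p => p.1 = y) = {y} ×ˢ (B.filter (fun z => E y z)) := by
      ext ⟨p1, p2⟩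
      simp only [hT, Finset.mem_filter, Finset.mem_product, Finset.mem_singleton]
      constructor
      · rintro ⟨⟨⟨hp1, hp2⟩, hE⟩, rfl⟩
        exact ⟨rfl, hp2, hE⟩
      · rintro ⟨rfl, hp2, hE⟩
        exact ⟨⟨⟨hy, hp2⟩, hE⟩, rfl⟩
    rw [hfib, Finset.card_product, Finset.card_singleton, one_mul]
    have : ↑(B.filter (fun z => E y z)) = {w | E y w ∧ E w x} := by
      ext z
      simp [hB, Set.Finite.mem_toFinset, and_comm]
    calc (B.filter (fun z => E y z)).card
        = ({w | E y w ∧ E w x} : Set V).ncard := by rw [← this, Set.ncard_coe_finset]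
      _ = c := tri_count_eq hirr hanti hC hxy hab
  -- count fiberwise over B
  have h2 : T.card = B.card * c := by
    rw [Finset.card_eq_sum_card_fiberwise (f := Prod.snd) (t := B)
      (fun p hp => (Finset.mem_filter.mp hp).1 |> Finset.mem_product.mp |>.2)]
    rw [Finset.sum_congr rfl (fun z hz => ?_), Finset.sum_const, smul_eq_mul]
    have hzx : E z x := by rw [hB] at hz; simpa using hz
    have hfib : T.filter (fun p => p.2 = z) = (A.filter (fun y => E y z)) ×ˢ {z} := by
      ext ⟨p1, p2⟩
      simp only [hT, Finset.mem_filter, Finset.mem_product, Finset.mem_singleton]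
      constructor
      · rintro ⟨⟨⟨hp1, hp2⟩, hE⟩, rfl⟩
        exact ⟨⟨hp1, hE⟩, rfl⟩
      · rintro ⟨⟨hp1, hE⟩, rfl⟩
        exact ⟨⟨⟨hp1, hz⟩, hE⟩, rfl⟩
    rw [hfib, Finset.card_product, Finset.card_singleton, mul_one]
    have : ↑(A.filter (fun y => E y z)) = {w | E x w ∧ E w z} := by
      ext y
      simp [hA, Set.Finite.mem_toFinset]
    calc (A.filter (fun y => E y z)).card
        = ({w | E x w ∧ E w z} : Set V).ncard := by rw [← this, Set.ncard_coe_finset]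
      _ = c := tri_count_eq hirr hanti hC hzx hab
  have hAB : A.card = B.card := Nat.eq_of_mul_eq_mul_right hcpos (h1 ▸ h2)
  calc {y | E x y}.ncard = A.card := by rw [hA, Set.ncard_eq_toFinset_card _ hfo]
    _ = B.card := hAB
    _ = {y | E y x}.ncard := by rw [hB, Set.ncard_eq_toFinset_card _ hfi]
end

section
/- The reachability relation A on the edges of a digraph—two edges being related iff they lie on a common alternating walk—is an equivalence relation. -/
/-- `w 0, w 1, …, w n` is an alternating walk: consecutive vertices are adjacent and
for `1 ≤ i ≤ n − 1`, `w (i−1) ∈ N⁺(w i) ↔ w (i+1) ∈ N⁺(w i)`. -/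
def IsAltWalk {V : Type*} (E : V → V → Prop) (w : ℕ → V) (n : ℕ) : Prop :=
  (∀ i, i < n → E (w i) (w (i + 1)) ∨ E (w (i + 1)) (w i)) ∧
  (∀ i, 1 ≤ i → i + 1 ≤ n → (E (w i) (w (i - 1)) ↔ E (w i) (w (i + 1))))

/-- The edge `p` lies on the walk `w 0, …, w n` (traversed in either direction). -/
def OnWalk {V : Type*} (w : ℕ → V) (n : ℕ) (p : V × V) : Prop :=
  ∃ i, i < n ∧ ((w i = p.1 ∧ w (i + 1) = p.2) ∨ (w i = p.2 ∧ w (i + 1) = p.1))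

/-- Two edges are reachable from each other if they lie on a common alternating walk. -/
def Reach {V : Type*} (E : V → V → Prop) (p q : V × V) : Prop :=
  E p.1 p.2 ∧ E q.1 q.2 ∧
    ∃ (w : ℕ → V) (n : ℕ), IsAltWalk E w n ∧ OnWalk w n p ∧ OnWalk w n q

section AW
variable {V : Type*} {E : V → V → Prop}

def awCat (w v : ℕ → V) (n : ℕ) : ℕ → V := fun k => if k ≤ n then w k else v (k - n)

lemma awCat_left (w v : ℕ → V) {n k : ℕ} (h : k ≤ n) : awCat w v n k = w k := if_pos h

lemma awCat_right (w v : ℕ → V) {n k : ℕ} (h0 : w n = v 0) (h : n ≤ k) :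
    awCat w v n k = v (k - n) := by
  unfold awCat
  split
  · have hk : k = n := le_antisymm ‹_› h
    subst hk
    simpa using h0
  · rfl

lemma alt_mono {w : ℕ → V} {n k : ℕ} (h : IsAltWalk E w n) (hk : k ≤ n) :
    IsAltWalk E w k :=
  ⟨fun i hi => h.1 i (lt_of_lt_of_le hi hk), fun i h1 h2 => h.2 i h1 (le_trans h2 hk)⟩

lemma rev_from {w : ℕ → V} {n j : ℕ} (h : IsAltWalk E w n) (hj : j ≤ n) :
    IsAltWalk E (fun k => w (j - k)) j := by
  constructor
  · intro i hi
    show E (w (j - i)) (w (j - (i+1))) ∨ E (w (j - (i+1))) (w (j - i))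
    have e1 : j - i = (j - (i+1)) + 1 := by omega
    rw [e1]
    exact (h.1 (j - (i+1)) (by omega)).symm
  · intro i h1 h2
    have e1 : j - (i - 1) = (j - i) + 1 := by omega
    have e2 : j - (i + 1) = (j - i) - 1 := by omega
    simp only [e1, e2]
    exact (h.2 (j - i) (by omega) (by omega)).symm

lemma rev_onWalk {w : ℕ → V} {n : ℕ} {p : V × V} (h : OnWalk w n p) :
    OnWalk (fun k => w (n - k)) n p := by
  obtain ⟨i, hi, hc⟩ := h
  refine ⟨n - i - 1, by omega, ?_⟩
  have e1 : n - (n - i - 1) = i + 1 := by omega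
  have e2 : n - (n - i - 1 + 1) = i := by omega
  simp only [e1, e2]
  tauto

lemma awCat_alt {w v : ℕ → V} {n m : ℕ} (hw : IsAltWalk E w n) (hv : IsAltWalk E v m)
    (hj : w n = v 0)
    (hmid : 1 ≤ n → 1 ≤ m → (E (w n) (w (n-1)) ↔ E (w n) (v 1))) :
    IsAltWalk E (awCat w v n) (n + m) := by
  constructor
  · intro i hi
    rcases lt_or_ge i n with h | h
    · rw [awCat_left w v (by omega), awCat_left w v (by omega)]
      exact hw.1 i h
    · rw [awCat_right w v hj (by omega), awCat_right w v hj (by omega)]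
      have e : i + 1 - n = (i - n) + 1 := by omega
      rw [e]
      exact hv.1 (i - n) (by omega)
  · intro i h1 h2
    rcases lt_or_ge (i+1) n with h | h
    · rw [awCat_left w v (by omega), awCat_left w v (by omega), awCat_left w v (by omega)]
      exact hw.2 i h1 (by omega)
    rcases lt_or_ge n i with h' | h'
    · rw [awCat_right w v hj (by omega), awCat_right w v hj (by omega),
        awCat_right w v hj (by omega)]
      have e1 : i - 1 - n = (i - n) - 1 := by omega
      have e2 : i + 1 - n = (i - n) + 1 := by omega
      rw [e1, e2]
      exact hv.2 (i - n) (by omega) (by omega)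
    · -- i = n or i + 1 = n; from h : n ≤ i + 1 and h' : i ≤ n
      rcases lt_or_ge i n with hin | hin
      · -- i + 1 = n
        have e : i + 1 = n := by omega
        rw [awCat_left w v (by omega), awCat_left w v (by omega), awCat_left w v (by omega)]
        exact hw.2 i h1 (by omega)
      · -- i = n
        have e : i = n := by omega
        subst e
        rw [awCat_left w v (le_refl i), awCat_left w v (by omega),
          awCat_right w v hj (by omega)]
        have e2 : i + 1 - i = 1 := by omega
        rw [e2]
        exact hmid (by omega) (by omega)

lemma onWalk_awCat_left {w : ℕ → V} (v : ℕ → V) {n : ℕ} (m : ℕ) {p : V × V}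
    (h : OnWalk w n p) : OnWalk (awCat w v n) (n + m) p := by
  obtain ⟨i, hi, hc⟩ := h
  refine ⟨i, by omega, ?_⟩
  rw [awCat_left w v (by omega), awCat_left w v (by omega)]
  exact hc

lemma onWalk_awCat_right (w : ℕ → V) {v : ℕ → V} {n : ℕ} {m : ℕ} {p : V × V}
    (hj : w n = v 0) (h : OnWalk v m p) : OnWalk (awCat w v n) (n + m) p := by
  obtain ⟨i, hi, hc⟩ := h
  refine ⟨n + i, by omega, ?_⟩
  rw [awCat_right w v hj (by omega), awCat_right w v hj (by omega)]
  have e1 : n + i - n = i := by omega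
  have e2 : n + i + 1 - n = i + 1 := by omega
  rw [e1, e2]
  exact hc

lemma canon {w : ℕ → V} {n : ℕ} {p q : V × V} (hw : IsAltWalk E w n)
    (hp : OnWalk w n p) (hq : OnWalk w n q) :
    ∃ w₂ i, IsAltWalk E w₂ n ∧ OnWalk w₂ n p ∧ i < n ∧ w₂ i = q.1 ∧ w₂ (i+1) = q.2 := by
  obtain ⟨i, hi, hc⟩ := hq
  rcases hc with ⟨h1, h2⟩ | ⟨h1, h2⟩
  · exact ⟨w, i, hw, hp, hi, h1, h2⟩
  · refine ⟨fun k => w (n - k), n - i - 1, rev_from hw (le_refl n), rev_onWalk hp,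
      by omega, ?_, ?_⟩
    · show w (n - (n - i - 1)) = q.1
      have e : n - (n - i - 1) = i + 1 := by omega
      rw [e]; exact h2
    · show w (n - (n - i - 1 + 1)) = q.2
      have e : n - (n - i - 1 + 1) = i := by omega
      rw [e]; exact h1

lemma key {w w' : ℕ → V} {n m i j : ℕ} {p r : V × V} {a b : V}
    (hw : IsAltWalk E w n) (hp : OnWalk w n p)
    (hi : i < n) (hwi : w i = a) (hwi1 : w (i+1) = b)
    (hw' : IsAltWalk E w' m) (hr : OnWalk w' m r)
    (hj : j < m) (hwj : w' j = a) (hwj1 : w' (j+1) = b) :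
    ∃ u L, IsAltWalk E u L ∧ OnWalk u L p ∧ OnWalk u L r := by
  set R : ℕ → V := fun k => w (n - k) with hR
  set C1 : ℕ → V := awCat w R n with hC1
  set B : ℕ → V := fun k => w' (j - k) with hB
  set D : ℕ → V := awCat B w' j with hD
  have hRalt : IsAltWalk E R (n - i) := alt_mono (rev_from hw (le_refl n)) (by omega)
  have hR0 : w n = R 0 := by simp [hR]
  have hC1alt : IsAltWalk E C1 (n + (n - i)) := by
    refine awCat_alt hw hRalt hR0 ?_
    intro _ _
    have : R 1 = w (n - 1) := rfl
    rw [this]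
  have hBalt : IsAltWalk E B j := rev_from hw' (by omega)
  have hB0 : B j = w' 0 := by simp [hB]
  have hDalt : IsAltWalk E D (j + m) := by
    refine awCat_alt hBalt hw' hB0 ?_
    intro h1 _
    have : B (j - 1) = w' 1 := by simp only [hB]; congr 1; omega
    rw [hB0, this]
  -- boundary between C1 and D
  have hC1end : C1 (n + (n - i)) = a := by
    rw [hC1, awCat_right w R hR0 (by omega)]
    simp only [hR]
    have e : n - (n + (n - i) - n) = i := by omega
    rw [e, hwi]
  have hD0 : D 0 = a := by
    rw [hD, awCat_left B w' (by omega)]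
    simp only [hB]
    rw [Nat.sub_zero, hwj]
  have hbd : C1 (n + (n - i)) = D 0 := by rw [hC1end, hD0]
  have hC1prev : C1 (n + (n - i) - 1) = b := by
    rw [hC1, awCat_right w R hR0 (by omega)]
    simp only [hR]
    have e : n - (n + (n - i) - 1 - n) = i + 1 := by omega
    rw [e, hwi1]
  refine ⟨awCat C1 D (n + (n - i)), (n + (n - i)) + (j + m), ?_, ?_, ?_⟩
  · refine awCat_alt hC1alt hDalt hbd ?_
    intro _ _
    rw [hC1end, hC1prev]
    rcases Nat.eq_zero_or_pos j with hj0 | hj0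
    · subst hj0
      have : D 1 = w' 1 := by
        rw [hD, awCat_right B w' hB0 (by omega)]
      rw [this]
      rw [show w' 1 = b from hwj1]
    · have : D 1 = w' (j - 1) := by
        rw [hD, awCat_left B w' (by omega)]
      rw [this]
      have := hw'.2 j hj0 (by omega)
      rw [hwj, hwj1] at this
      exact this.symm
  · exact onWalk_awCat_left D (j + m) (onWalk_awCat_left R (n - i) hp)
  · exact onWalk_awCat_right C1 hbd (onWalk_awCat_right B hB0 hr)

end AW

/-- The reachability relation on the edges of a digraph is an equivalence relation. -/
theorem stmt11 {V : Type*} (E : V → V → Prop)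
    (hirr : ∀ x, ¬ E x x) (hanti : ∀ x y, E x y → ¬ E y x) :
    Equivalence (fun e f : {p : V × V // E p.1 p.2} => Reach E e.1 f.1) := by
  constructor
  · rintro ⟨⟨a, b⟩, he⟩
    refine ⟨he, he, fun k => if k = 0 then a else b, 1, ⟨?_, ?_⟩, ?_, ?_⟩
    · intro i hi
      have hiz : i = 0 := by omega
      subst hiz
      left; simpa using he
    · intro i h1 h2; omega
    · exact ⟨0, one_pos, Or.inl ⟨by simp, by simp⟩⟩
    · exact ⟨0, one_pos, Or.inl ⟨by simp, by simp⟩⟩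
  · rintro e f ⟨hp, hq, w, n, hw, op, oq⟩
    exact ⟨hq, hp, w, n, hw, oq, op⟩
  · rintro e f g ⟨hp, hq, w, n, hw, op, oq⟩ ⟨_, hr, w', m, hw', oq', or'⟩
    obtain ⟨w₂, i, hw₂, op₂, hi, h1, h2⟩ := canon hw op oq
    obtain ⟨w₂', j, hw₂', or₂, hj, h1', h2'⟩ := canon hw' or' oq'
    obtain ⟨u, L, hu, hup, hur⟩ := key hw₂ op₂ hi h1 h2 hw₂' or₂ hj h1' h2'
    exact ⟨hp, hr, u, L, hu, hup, hur⟩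
end

section
/- The digraph H[K̄_n] is C-homogeneous for every n ≥ 1, given that H is a homogeneous digraph in which every vertex is adjacent to every other vertex. -/
/-- Homogeneity: every isomorphism between two finite induced subdigraphs extends
to an automorphism. -/
def Homog {W : Type*} (R : W → W → Prop) : Prop :=
  ∀ (S T : Finset W) (f : W → W), Set.BijOn f (↑S) (↑T) →
    (∀ a ∈ S, ∀ b ∈ S, R a b ↔ R (f a) (f b)) →
    ∃ φ : Equiv.Perm W, (∀ u v, R u v ↔ R (φ u) (φ v)) ∧ ∀ a ∈ S, φ a = f a

/-- Any injection defined on a finset of a fintype extends to a permutation. -/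
theorem exists_perm_extend {α : Type*} [Fintype α] [DecidableEq α]
    (s : Finset α) (g : α → α) (hg : Set.InjOn g ↑s) :
    ∃ σ : Equiv.Perm α, ∀ i ∈ s, σ i = g i := by
  classical
  set t : Finset α := s.image g with ht
  have hcard : t.card = s.card := Finset.card_image_of_injOn hg
  have hmap : ∀ x : {x // x ∈ s}, g x.1 ∈ t := fun x =>
    Finset.mem_image_of_mem g x.2
  let e0 : {x // x ∈ s} → {x // x ∈ t} := fun x => ⟨g x.1, hmap x⟩
  have hinj : Function.Injective e0 := by
    intro x y hxy
    exact Subtype.ext (hg x.2 y.2 (congrArg Subtype.val hxy))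
  have hcard' : Fintype.card {x // x ∈ s} = Fintype.card {x // x ∈ t} := by
    simp [Fintype.card_coe, hcard]
  have hbij : Function.Bijective e0 :=
    (Fintype.bijective_iff_injective_and_card e0).2 ⟨hinj, hcard'⟩
  let e : {x // x ∈ s} ≃ {x // x ∈ t} := Equiv.ofBijective e0 hbij
  have hcardc : Fintype.card {x // ¬ x ∈ s} = Fintype.card {x // ¬ x ∈ t} := by
    rw [Fintype.card_subtype_compl, Fintype.card_subtype_compl]
    simp [Fintype.card_coe, hcard]
  let e' : {x // ¬ x ∈ s} ≃ {x // ¬ x ∈ t} := Fintype.equivOfCardEq hcardc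
  refine ⟨Equiv.subtypeCongr e e', ?_⟩
  intro i hi
  simp [Equiv.subtypeCongr, Equiv.sumCompl, hi, e, e0, Equiv.ofBijective]

/-- If `H` is a homogeneous digraph in which every two distinct vertices are
adjacent, then the lexicographic product `H[K̄_n]` is C-homogeneous for every
`n ≥ 1`. -/
theorem stmt18 {W : Type*} (R : W → W → Prop)
    (hirr : ∀ x, ¬ R x x) (hanti : ∀ x y, R x y → ¬ R y x)
    (hhom : Homog R)
    (hadj : ∀ a b : W, a ≠ b → (R a b ∨ R b a))
    (n : ℕ) (hn : 1 ≤ n) :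
    CHom (fun p q : W × Fin n => R p.1 q.1) := by
  classical
  intro S T _hS _hT f hbij hE
  -- Step 1: f respects fibers
  have L1 : ∀ p ∈ S, ∀ q ∈ S, p.1 = q.1 → (f p).1 = (f q).1 := by
    intro p hp q hq h
    by_contra hne
    have h1 : ¬ R p.1 q.1 := h ▸ hirr q.1
    have h2 : ¬ R q.1 p.1 := h ▸ hirr q.1
    rcases hadj _ _ hne with hr | hr
    · exact h1 ((hE p hp q hq).mpr hr)
    · exact h2 ((hE q hq p hp).mpr hr)
  have L2 : ∀ p ∈ S, ∀ q ∈ S, (f p).1 = (f q).1 → p.1 = q.1 := by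
    intro p hp q hq h
    by_contra hne
    rcases hadj _ _ hne with hr | hr
    · have h3 : R (f p).1 (f q).1 := (hE p hp q hq).mp hr
      rw [h] at h3
      exact hirr _ h3
    · have h3 : R (f q).1 (f p).1 := (hE q hq p hp).mp hr
      rw [h] at h3
      exact hirr _ h3
  set A : Finset W := S.image Prod.fst with hA
  set B : Finset W := T.image Prod.fst with hB
  -- the induced map on first coordinates
  let gfun : W → W := fun a =>
    if h : ∃ p, p ∈ S ∧ p.1 = a then (f h.choose).1 else a
  have hgfun : ∀ p ∈ S, gfun p.1 = (f p).1 := by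
    intro p hp
    have h : ∃ q, q ∈ S ∧ q.1 = p.1 := ⟨p, hp, rfl⟩
    simp only [gfun, dif_pos h]
    exact L1 _ h.choose_spec.1 _ hp h.choose_spec.2
  have hmemA : ∀ p ∈ S, p.1 ∈ A := fun p hp => Finset.mem_image_of_mem _ hp
  have hAex : ∀ a ∈ A, ∃ p, p ∈ S ∧ p.1 = a := by
    intro a ha
    rcases Finset.mem_image.mp ha with ⟨p, hp, hpa⟩
    exact ⟨p, hp, hpa⟩
  have hgbij : Set.BijOn gfun (↑A) (↑B) := by
    refine ⟨?_, ?_, ?_⟩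
    · intro a ha
      rcases hAex a (by exact_mod_cast ha) with ⟨p, hp, rfl⟩
      rw [hgfun p hp]
      exact_mod_cast Finset.mem_image_of_mem _ (by exact_mod_cast hbij.mapsTo hp)
    · intro a ha a' ha' h
      rcases hAex a (by exact_mod_cast ha) with ⟨p, hp, rfl⟩
      rcases hAex a' (by exact_mod_cast ha') with ⟨q, hq, rfl⟩
      rw [hgfun p hp, hgfun q hq] at h
      exact L2 p hp q hq h
    · intro b hb
      rcases Finset.mem_image.mp (by exact_mod_cast hb) with ⟨q, hq, rfl⟩
      rcases hbij.surjOn (by exact_mod_cast hq) with ⟨p, hp, rfl⟩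
      have hp' : p ∈ S := by exact_mod_cast hp
      exact ⟨p.1, by exact_mod_cast hmemA p hp', hgfun p hp'⟩
  have hgpres : ∀ a ∈ A, ∀ a' ∈ A, R a a' ↔ R (gfun a) (gfun a') := by
    intro a ha a' ha'
    rcases hAex a ha with ⟨p, hp, rfl⟩
    rcases hAex a' ha' with ⟨q, hq, rfl⟩
    rw [hgfun p hp, hgfun q hq]
    exact hE p hp q hq
  obtain ⟨ψ, hψauto, hψeq⟩ := hhom A B gfun hgbij hgpres
  -- Step 2: per-fiber permutations of Fin n
  have hσ : ∀ a : W, ∃ σ : Equiv.Perm (Fin n),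
      ∀ i : Fin n, (a, i) ∈ S → σ i = (f (a, i)).2 := by
    intro a
    have hinj : Set.InjOn (fun i => (f (a, i)).2)
        ↑(Finset.univ.filter (fun i : Fin n => (a, i) ∈ S)) := by
      intro i hi j hj h
      simp only [Finset.coe_filter, Set.mem_setOf_eq, Finset.mem_univ, true_and] at hi hj
      have h1 : (f (a, i)).1 = (f (a, j)).1 := L1 _ hi _ hj rfl
      have h2 : f (a, i) = f (a, j) := Prod.ext h1 h
      have h3 := hbij.injOn (by exact_mod_cast hi) (by exact_mod_cast hj) h2
      exact congrArg Prod.snd h3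
    obtain ⟨σ, hσ⟩ := exists_perm_extend _ _ hinj
    exact ⟨σ, fun i hi => hσ i (by simp [hi])⟩
  choose σ hσeq using hσ
  refine ⟨Equiv.prodShear ψ σ, ?_, ?_⟩
  · intro u v
    exact hψauto u.1 v.1
  · rintro ⟨a, i⟩ hp
    have h1 : ψ a = (f (a, i)).1 := by
      rw [hψeq a (hmemA _ hp)]; exact hgfun _ hp
    have h2 : σ a i = (f (a, i)).2 := hσeq a i hp
    exact Prod.ext h1 h2
end
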